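/- arXiv:2006.04023 — 3 statements merged into one kernel-verified Lean document; each statement's English description precedes it below -/
import Mathlib

section
/- The algebra of O(n)-invariant complex polynomial functions on ℝⁿ equals the polynomial algebra ℂ[q] generated by the quadratic form q(x) = ∑_{i=1}^n x_i²; that is, every polynomial f on ℝⁿ satisfying f(gx) = f(x) for all g ∈ O(n) is a polynomial in q. -/
/-!
O(n) acts transitively on spheres (one reflection maps `‖x‖ e₀` to `x`), so an invariant `f`
is determined by its restriction `P(t) = f(t e₀)` to a line. Invariance under `-1` makes `P`
even, hence `P(t) = R(t²)` and `f(x) = R(q(x))` at every real point; a complex polynomial is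
determined by its values on `ℝⁿ`.
-/

open MvPolynomial Matrix

namespace MvPolynomial

variable {σ R : Type*}

theorem eval_polynomial_aeval [CommSemiring R] (v : σ → R) (a : MvPolynomial σ R)
    (p : Polynomial R) : eval v (Polynomial.aeval a p) = p.eval (eval v a) := by
  simpa using (Polynomial.aeval_algHom_apply (aeval v) a p).symm

theorem eval_aeval_C_mul_X [CommSemiring R] (v : σ → R) (f : MvPolynomial σ R) (t : R) :
    (aeval (fun i => Polynomial.C (v i) * Polynomial.X) f).eval t = eval (t • v) f := by
  rw [← Polynomial.coe_aeval_eq_eval, comp_aeval_apply, aeval_eq_eval]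
  congr
  funext i
  simp only [map_mul, Polynomial.aeval_C, Polynomial.aeval_X, Algebra.algebraMap_self,
    RingHom.id_apply, Pi.smul_apply, smul_eq_mul]
  ring

theorem eq_of_eval_ofReal_eq {p q : MvPolynomial σ ℂ}
    (h : ∀ x : σ → ℝ, eval (fun i => (x i : ℂ)) p = eval (fun i => (x i : ℂ)) q) : p = q := by
  refine funext_set (fun _ => Set.range ((↑) : ℝ → ℂ))
    (fun _ => Set.infinite_range_of_injective Complex.ofReal_injective) fun z hz => ?_
  choose x hx using fun i => hz i trivial
  simpa only [hx] using h x

end MvPolynomial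

namespace Polynomial

theorem eq_of_eval_ofReal_eq {p q : Polynomial ℂ} (h : ∀ t : ℝ, p.eval (t : ℂ) = q.eval (t : ℂ)) :
    p = q :=
  eq_of_infinite_eval_eq p q <| (Set.infinite_range_of_injective Complex.ofReal_injective).mono <|
    Set.range_subset_iff.mpr h

theorem expand_contract_two_of_comp_neg_X {R : Type*} [CommRing R] [IsAddTorsionFree R]
    {p : Polynomial R} (h : p.comp (-X) = p) : expand R 2 (contract 2 p) = p := by
  ext n
  rw [coeff_expand two_pos, coeff_contract two_ne_zero]
  split_ifs with hn
  · rw [Nat.div_mul_cancel hn]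
  · have hcoeff := congrArg (coeff · n) h
    rw [← neg_one_mul, ← C_1, ← C_neg] at hcoeff
    simp only [comp_C_mul_X_coeff, (Nat.odd_iff.mpr (Nat.two_dvd_ne_zero.mp hn)).neg_one_pow,
      mul_neg_one] at hcoeff
    exact (neg_eq_self.mp hcoeff).symm

end Polynomial

namespace Matrix

variable {ι : Type*} [Fintype ι] [DecidableEq ι]

theorem sum_sq_mulVec_of_mem_orthogonalGroup {R : Type*} [CommRing R] {g : Matrix ι ι R}
    (hg : g ∈ orthogonalGroup ι R) (x : ι → R) : ∑ i, (g *ᵥ x) i ^ 2 = ∑ i, x i ^ 2 := by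
  have hgg : (g *ᵥ x) ⬝ᵥ (g *ᵥ x) = x ⬝ᵥ x := by
    rw [dotProduct_mulVec, ← mulVec_transpose, mulVec_mulVec,
      (mem_orthogonalGroup_iff' ι R).mp hg, one_mulVec]
  simpa [dotProduct, sq] using hgg

theorem exists_mem_orthogonalGroup_mulVec_eq {x y : ι → ℝ} (h : ∑ i, x i ^ 2 = ∑ i, y i ^ 2) :
    ∃ g ∈ orthogonalGroup ι ℝ, g *ᵥ x = y := by
  have hnorm : ‖WithLp.toLp 2 x‖ = ‖WithLp.toLp 2 y‖ := by
    simp [EuclideanSpace.norm_eq, h]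
  let R := Submodule.reflection (ℝ ∙ (WithLp.toLp 2 x - WithLp.toLp 2 y))ᗮ
  let b := (EuclideanSpace.basisFun ι ℝ).toBasis
  refine ⟨R.toLinearEquiv.toLinearMap.toMatrix b b, R.toMatrix_mem_unitaryGroup _ _, ?_⟩
  have hR := LinearMap.toMatrix_mulVec_repr b b R.toLinearEquiv.toLinearMap (WithLp.toLp 2 x)
  rwa [LinearEquiv.coe_coe, LinearIsometryEquiv.coe_toLinearEquiv,
    Submodule.reflection_sub hnorm] at hR

end Matrix

variable {ι : Type*} [Fintype ι] [DecidableEq ι]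

theorem eval_mulVec_aeval_sum_X_sq {g : Matrix ι ι ℝ} (hg : g ∈ orthogonalGroup ι ℝ)
    (x : ι → ℝ) (p : Polynomial ℂ) :
    eval (fun i => ((g *ᵥ x) i : ℂ)) (Polynomial.aeval (∑ i, X i ^ 2) p) =
      eval (fun i => (x i : ℂ)) (Polynomial.aeval (∑ i, X i ^ 2) p) := by
  simp only [eval_polynomial_aeval, map_sum, map_pow, eval_X]
  exact_mod_cast congrArg (fun s : ℝ => p.eval (s : ℂ)) (sum_sq_mulVec_of_mem_orthogonalGroup hg x)

theorem exists_eq_aeval_sum_X_sq_of_invariant [Nonempty ι] {f : MvPolynomial ι ℂ}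
    (hf : ∀ g ∈ orthogonalGroup ι ℝ, ∀ x : ι → ℝ,
      eval (fun i => ((g *ᵥ x) i : ℂ)) f = eval (fun i => (x i : ℂ)) f) :
    ∃ p : Polynomial ℂ, f = Polynomial.aeval (∑ i, X i ^ 2) p := by
  obtain ⟨i₀⟩ := ‹Nonempty ι›
  let e : ι → ℝ := Pi.single i₀ 1
  let P : Polynomial ℂ := aeval (fun i => Polynomial.C (e i : ℂ) * Polynomial.X) f
  have hP : ∀ s : ℝ, P.eval (s : ℂ) = eval (fun i => ((s • e) i : ℂ)) f := fun s => by
    rw [eval_aeval_C_mul_X]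
    congr
    funext i
    simp
  have hP_even : P.comp (-Polynomial.X) = P := Polynomial.eq_of_eval_ofReal_eq fun s => by
    rw [Polynomial.eval_comp, Polynomial.eval_neg, Polynomial.eval_X, ← Complex.ofReal_neg, hP, hP,
      ← hf (-1) ((mem_orthogonalGroup_iff' ι ℝ).mpr (by simp)), neg_mulVec, one_mulVec, neg_smul,
      neg_neg]
  refine ⟨Polynomial.contract 2 P, eq_of_eval_ofReal_eq fun x => ?_⟩
  have hq : √(∑ i, x i ^ 2) ^ 2 = ∑ i, x i ^ 2 :=
    Real.sq_sqrt (Finset.sum_nonneg fun i _ => sq_nonneg (x i))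
  obtain ⟨g, hg, hgx⟩ := exists_mem_orthogonalGroup_mulVec_eq (x := √(∑ i, x i ^ 2) • e) (y := x)
    (by simp [e, Pi.single_apply, hq])
  calc eval (fun i => (x i : ℂ)) f
      = eval (fun i => ((√(∑ i, x i ^ 2) • e) i : ℂ)) f := by
        rw [← hf g hg (√(∑ i, x i ^ 2) • e), hgx]
    _ = (Polynomial.expand ℂ 2 (Polynomial.contract 2 P)).eval (√(∑ i, x i ^ 2) : ℂ) := by
      rw [Polynomial.expand_contract_two_of_comp_neg_X hP_even, hP]
    _ = eval (fun i => (x i : ℂ)) (Polynomial.aeval (∑ i, X i ^ 2) (Polynomial.contract 2 P)) := by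
      rw [Polynomial.expand_eval, eval_polynomial_aeval]
      simp only [map_sum, map_pow, eval_X]
      exact_mod_cast congrArg (fun s : ℝ => (Polynomial.contract 2 P).eval (s : ℂ)) hq

/-- The `O(n)`-invariant polynomial functions on `ℝⁿ` are exactly the
polynomials in the quadratic form `q = ∑ xᵢ²`: a polynomial `f` satisfies
`f(gx) = f(x)` for all `g ∈ O(n)` and all `x ∈ ℝⁿ` iff `f = p(q)` for some
one-variable polynomial `p`. -/
theorem invariants_eq_poly_in_q (n : ℕ) (f : MvPolynomial (Fin n) ℂ) :
    (∀ g : Matrix.orthogonalGroup (Fin n) ℝ, ∀ x : Fin n → ℝ,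
        eval (fun i => ((Matrix.mulVec (g : Matrix (Fin n) (Fin n) ℝ) x) i : ℂ)) f =
        eval (fun i => (x i : ℂ)) f) ↔
      ∃ p : Polynomial ℂ, f = Polynomial.aeval (∑ i : Fin n, X i ^ 2) p := by
  constructor
  · intro hf
    rcases isEmpty_or_nonempty (Fin n) with _ | _
    · exact ⟨Polynomial.C (coeff 0 f), by rw [eq_C_of_isEmpty f]; simp⟩
    · exact exists_eq_aeval_sum_X_sq_of_invariant fun g hg => hf ⟨g, hg⟩
  · rintro ⟨p, rfl⟩ g x
    exact eval_mulVec_aeval_sum_X_sq g.2 x p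
end

section
/- For n ≥ 1 and d ≥ 0, the space ℂ[ℝⁿ]_d of homogeneous polynomials of degree d decomposes as the direct sum of q·ℂ[ℝⁿ]_{d-2} and the space ℋ^d of harmonic homogeneous polynomials of degree d, where q = ∑x_i². Consequently dim ℋ^d = dim ℂ[ℝⁿ]_d − dim ℂ[ℝⁿ]_{d-2} = C(n+d-1, d) − C(n+d-3, d-2). -/
open MvPolynomial

/-- The Laplacian `Δ = ∑ ∂²/∂xᵢ²` on `ℂ[x₁,…,xₙ]`. -/
noncomputable def lap (n : ℕ) : MvPolynomial (Fin n) ℂ →ₗ[ℂ] MvPolynomial (Fin n) ℂ :=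
  ∑ i : Fin n, ((pderiv i).toLinearMap ∘ₗ (pderiv i).toLinearMap)

/-- The space `ℋᵈ` of harmonic homogeneous polynomials of degree `d`. -/
noncomputable def harm (n d : ℕ) : Submodule ℂ (MvPolynomial (Fin n) ℂ) :=
  homogeneousSubmodule (Fin n) ℂ d ⊓ LinearMap.ker (lap n)

/-- The submodule `q·ℂ[ℝⁿ]_{d-2}` (zero when `d < 2`), `q = ∑ xᵢ²`. -/
noncomputable def qMul (n d : ℕ) : Submodule ℂ (MvPolynomial (Fin n) ℂ) :=
  if 2 ≤ d then
    (homogeneousSubmodule (Fin n) ℂ (d - 2)).map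
      (LinearMap.mulLeft ℂ (∑ i : Fin n, X i ^ 2))
  else ⊥

/-!
On `ℂ[x₁,…,xₙ]` consider the Fischer inner product `⟪p, r⟫ = ∑_α conj(p_α) r_α α!`. Multiplication
by `xᵢ` is adjoint to `∂ᵢ` for it, so multiplication by `q = ∑ xᵢ²` is adjoint to `Δ`. Hence if
`q g` is harmonic then `⟪q g, q g⟫ = ⟪g, Δ (q g)⟫ = 0`, and `q·ℂ[ℝⁿ]_{d-2}` meets `ℋᵈ` trivially.
On the other hand `ℋᵈ` is the kernel of `Δ : ℂ[ℝⁿ]_d → ℂ[ℝⁿ]_{d-2}`, so rank–nullity gives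
`dim ℋᵈ ≥ dim ℂ[ℝⁿ]_d - dim ℂ[ℝⁿ]_{d-2}`, while multiplication by `q ≠ 0` is injective. The two
subspaces therefore fill `ℂ[ℝⁿ]_d`, whose dimension counts the monomials of degree `d`.
-/

namespace MvPolynomial

section Fischer

variable {σ : Type*}

def monomialFactorial (α : σ →₀ ℕ) : ℕ := α.prod fun _ k => k.factorial

lemma monomialFactorial_pos (α : σ →₀ ℕ) : 0 < monomialFactorial α :=
  Finset.prod_pos fun _ _ => Nat.factorial_pos _

lemma monomialFactorial_eq_mul_sub_single {β : σ →₀ ℕ} {i : σ} (hi : β i ≠ 0) :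
    monomialFactorial β = β i * monomialFactorial (β - Finsupp.single i 1) := by
  classical
  have herase : (β - Finsupp.single i 1).erase i = β.erase i := by
    ext j
    rcases eq_or_ne j i with rfl | hj
    · simp
    · simp [Finsupp.erase_ne hj, hj.symm]
  have hi' : (β - Finsupp.single i 1 : σ →₀ ℕ) i = β i - 1 := by simp
  unfold monomialFactorial
  rw [← Finsupp.mul_prod_erase' β i _ (fun _ => Nat.factorial_zero),
    ← Finsupp.mul_prod_erase' (β - Finsupp.single i 1) i _ (fun _ => Nat.factorial_zero),
    herase, hi', ← mul_assoc, ← Nat.mul_factorial_pred hi]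

noncomputable def fischer (p r : MvPolynomial σ ℂ) : ℂ :=
  ∑ α ∈ r.support, starRingEnd ℂ (p.coeff α) * r.coeff α * monomialFactorial α

lemma fischer_eq_sum_of_support_subset (p : MvPolynomial σ ℂ) {r : MvPolynomial σ ℂ}
    {s : Finset (σ →₀ ℕ)} (hs : r.support ⊆ s) :
    fischer p r = ∑ α ∈ s, starRingEnd ℂ (p.coeff α) * r.coeff α * monomialFactorial α :=
  Finset.sum_subset hs fun α _ hα => by rw [notMem_support_iff.mp hα]; ring

lemma fischer_add_right (p r r' : MvPolynomial σ ℂ) :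
    fischer p (r + r') = fischer p r + fischer p r' := by
  classical
  rw [fischer_eq_sum_of_support_subset p support_add,
    fischer_eq_sum_of_support_subset p Finset.subset_union_left,
    fischer_eq_sum_of_support_subset p Finset.subset_union_right, ← Finset.sum_add_distrib]
  simp only [coeff_add, mul_add, add_mul]

lemma fischer_sum_right {ι : Type*} (s : Finset ι) (p : MvPolynomial σ ℂ)
    (r : ι → MvPolynomial σ ℂ) : fischer p (∑ i ∈ s, r i) = ∑ i ∈ s, fischer p (r i) :=
  map_sum (AddMonoidHom.mk' (fischer p) (fischer_add_right p)) r s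

lemma fischer_sum_left {ι : Type*} (s : Finset ι) (p : ι → MvPolynomial σ ℂ)
    (r : MvPolynomial σ ℂ) : fischer (∑ i ∈ s, p i) r = ∑ i ∈ s, fischer (p i) r := by
  simp only [fischer, coeff_sum, map_sum, Finset.sum_mul]
  exact Finset.sum_comm

lemma fischer_monomial_right (p : MvPolynomial σ ℂ) (β : σ →₀ ℕ) (b : ℂ) :
    fischer p (monomial β b) = starRingEnd ℂ (p.coeff β) * b * monomialFactorial β := by
  classical
  rw [fischer_eq_sum_of_support_subset p support_monomial_subset, Finset.sum_singleton,
    coeff_monomial, if_pos rfl]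

lemma fischer_X_mul (i : σ) (p r : MvPolynomial σ ℂ) :
    fischer (X i * p) r = fischer p (pderiv i r) := by
  classical
  induction r using MvPolynomial.induction_on' with
  | monomial β b =>
    rw [pderiv_monomial, fischer_monomial_right, fischer_monomial_right, coeff_X_mul']
    by_cases hi : β i = 0
    · simp [hi]
    · rw [if_pos (Finsupp.mem_support_iff.mpr hi), monomialFactorial_eq_mul_sub_single hi]
      push_cast
      ring
  | add r r' hr hr' => rw [map_add, fischer_add_right, fischer_add_right, hr, hr']

lemma fischer_self (p : MvPolynomial σ ℂ) :
    fischer p p =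
      ((∑ α ∈ p.support, Complex.normSq (p.coeff α) * monomialFactorial α : ℝ) : ℂ) := by
  rw [fischer, Complex.ofReal_sum]
  refine Finset.sum_congr rfl fun α _ => ?_
  rw [Complex.ofReal_mul, Complex.normSq_eq_conj_mul_self]
  push_cast
  ring

lemma eq_zero_of_fischer_self_eq_zero {p : MvPolynomial σ ℂ} (h : fischer p p = 0) : p = 0 := by
  rw [fischer_self, Complex.ofReal_eq_zero, Finset.sum_eq_zero_iff_of_nonneg
    fun α _ => mul_nonneg (Complex.normSq_nonneg _) (Nat.cast_nonneg _)] at h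
  by_contra hp
  obtain ⟨α, hα⟩ := support_nonempty.mpr hp
  have := h α hα
  rw [mul_eq_zero, Complex.normSq_eq_zero, Nat.cast_eq_zero] at this
  exact this.elim (mem_support_iff.mp hα) (monomialFactorial_pos α).ne'

end Fischer

lemma pderiv_eq_zero_of_isHomogeneous_zero {σ R : Type*} [CommSemiring R] {p : MvPolynomial σ R}
    (h : p.IsHomogeneous 0) (i : σ) : pderiv i p = 0 := by
  rw [totalDegree_eq_zero_iff_eq_C.mp (Nat.le_zero.mp h.totalDegree_le), pderiv_C]

section Dimension

variable {K σ : Type*} [Field K] [Fintype σ]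

lemma homogeneousSubmodule_eq_restrictSupport [DecidableEq σ] (d : ℕ) :
    homogeneousSubmodule σ K d =
      restrictSupport K ((Finset.univ.finsuppAntidiag d : Finset (σ →₀ ℕ)) : Set (σ →₀ ℕ)) := by
  rw [homogeneousSubmodule_eq_finsupp_supported]
  congr
  ext α
  simp [Finsupp.degree_eq_sum]

lemma finrank_homogeneousSubmodule (d : ℕ) :
    Module.finrank K (homogeneousSubmodule σ K d) = (Fintype.card σ + d - 1).choose d := by
  classical
  rw [homogeneousSubmodule_eq_restrictSupport,
    Module.finrank_eq_card_basis (basisRestrictSupport _ _)]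
  simp [Finset.card_finsuppAntidiag_nat_eq_choose]

instance (d : ℕ) : FiniteDimensional K (homogeneousSubmodule σ K d) :=
  Module.Finite.iff_fg.mpr (homogeneousSubmodule_fg σ K d)

end Dimension

end MvPolynomial

section Laplacian

variable {n : ℕ}

lemma lap_apply (p : MvPolynomial (Fin n) ℂ) : lap n p = ∑ i, pderiv i (pderiv i p) := by
  simp [lap]

lemma fischer_sum_X_sq_mul (p r : MvPolynomial (Fin n) ℂ) :
    fischer ((∑ i, X i ^ 2) * p) r = fischer p (lap n r) := by
  simp only [Finset.sum_mul, fischer_sum_left, lap_apply, fischer_sum_right, sq, mul_assoc,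
    fischer_X_mul]

lemma MvPolynomial.IsHomogeneous.lap {p : MvPolynomial (Fin n) ℂ} {d : ℕ}
    (h : p.IsHomogeneous d) :
    (lap n p).IsHomogeneous (d - 2) := by
  rw [lap_apply, show d - 2 = d - 1 - 1 by omega]
  exact IsHomogeneous.sum _ _ _ fun i _ => h.pderiv.pderiv

lemma lap_eq_zero_of_isHomogeneous {p : MvPolynomial (Fin n) ℂ} {d : ℕ} (hd : d < 2)
    (h : p.IsHomogeneous d) : lap n p = 0 := by
  have h0 : ∀ i, (pderiv i p).IsHomogeneous 0 := fun i => by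
    simpa [show d - 1 = 0 by omega] using h.pderiv (i := i)
  simp [lap_apply, pderiv_eq_zero_of_isHomogeneous_zero (h0 _)]

lemma sum_X_sq_ne_zero [NeZero n] : (∑ i : Fin n, X i ^ 2 : MvPolynomial (Fin n) ℂ) ≠ 0 := by
  intro h
  exact NeZero.ne n (by simpa using congrArg (eval fun _ => (1 : ℂ)) h)

lemma qMul_eq_map_of_two_le {d : ℕ} (hd : 2 ≤ d) :
    qMul n d = (homogeneousSubmodule (Fin n) ℂ (d - 2)).map
      (LinearMap.mulLeft ℂ (∑ i : Fin n, X i ^ 2)) :=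
  if_pos hd

lemma qMul_eq_bot_of_lt_two {d : ℕ} (hd : d < 2) : qMul n d = ⊥ :=
  if_neg (by omega)

lemma harm_eq_homogeneousSubmodule_of_lt_two {d : ℕ} (hd : d < 2) :
    harm n d = homogeneousSubmodule (Fin n) ℂ d :=
  inf_eq_left.mpr fun _ hp => lap_eq_zero_of_isHomogeneous hd hp

lemma qMul_le_homogeneousSubmodule (d : ℕ) : qMul n d ≤ homogeneousSubmodule (Fin n) ℂ d := by
  rcases lt_or_ge d 2 with hd | hd
  · simp [qMul_eq_bot_of_lt_two hd]
  · rw [qMul_eq_map_of_two_le hd]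
    rintro _ ⟨g, hg, rfl⟩
    have hq : (∑ i : Fin n, X i ^ 2 : MvPolynomial (Fin n) ℂ).IsHomogeneous 2 :=
      IsHomogeneous.sum _ _ _ fun i _ => isHomogeneous_X_pow i 2
    simpa [show 2 + (d - 2) = d by omega] using hq.mul hg

instance (d : ℕ) : FiniteDimensional ℂ (qMul n d) :=
  Submodule.finiteDimensional_of_le (qMul_le_homogeneousSubmodule d)

instance (d : ℕ) : FiniteDimensional ℂ (harm n d) :=
  Submodule.finiteDimensional_of_le inf_le_left

lemma disjoint_qMul_harm (d : ℕ) : Disjoint (qMul n d) (harm n d) := by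
  rcases lt_or_ge d 2 with hd | hd
  · simp [qMul_eq_bot_of_lt_two hd]
  rw [qMul_eq_map_of_two_le hd, Submodule.disjoint_def]
  rintro _ ⟨g, -, rfl⟩ hharm
  rw [LinearMap.mulLeft_apply] at hharm ⊢
  refine eq_zero_of_fischer_self_eq_zero ?_
  rw [fischer_sum_X_sq_mul, LinearMap.mem_ker.mp hharm.2]
  simp [fischer]

lemma finrank_qMul_of_two_le [NeZero n] {d : ℕ} (hd : 2 ≤ d) :
    Module.finrank ℂ (qMul n d) = Module.finrank ℂ (homogeneousSubmodule (Fin n) ℂ (d - 2)) := by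
  have hinj : Function.Injective (LinearMap.mulLeft ℂ (∑ i : Fin n, X i ^ 2)) :=
    fun _ _ h => mul_left_cancel₀ sum_X_sq_ne_zero h
  rw [qMul_eq_map_of_two_le hd]
  exact (Submodule.equivMapOfInjective _ hinj _).finrank_eq.symm

lemma finrank_qMul [NeZero n] (d : ℕ) :
    Module.finrank ℂ (qMul n d) = if 2 ≤ d then (n + d - 3).choose (d - 2) else 0 := by
  split_ifs with hd
  · rw [finrank_qMul_of_two_le hd, finrank_homogeneousSubmodule, Fintype.card_fin,
      show n + (d - 2) - 1 = n + d - 3 by omega]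
  · rw [qMul_eq_bot_of_lt_two (by omega), finrank_bot]

lemma finrank_homogeneousSubmodule_le_finrank_harm_add_finrank (d : ℕ) :
    Module.finrank ℂ (homogeneousSubmodule (Fin n) ℂ d) ≤
      Module.finrank ℂ (harm n d) + Module.finrank ℂ (homogeneousSubmodule (Fin n) ℂ (d - 2)) := by
  set L := (lap n).domRestrict (homogeneousSubmodule (Fin n) ℂ d)
  have hrange : LinearMap.range L ≤ homogeneousSubmodule (Fin n) ℂ (d - 2) := by
    rintro _ ⟨⟨p, hp⟩, rfl⟩
    exact hp.lap
  have hker : Module.finrank ℂ (LinearMap.ker L) = Module.finrank ℂ (harm n d) := by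
    rw [← Submodule.finrank_map_subtype_eq, LinearMap.ker_domRestrict,
      Submodule.map_comap_subtype]
    rfl
  have := LinearMap.finrank_range_add_finrank_ker L
  have := Submodule.finrank_mono hrange
  omega

lemma finrank_homogeneousSubmodule_le_finrank_qMul_add_finrank_harm [NeZero n] (d : ℕ) :
    Module.finrank ℂ (homogeneousSubmodule (Fin n) ℂ d) ≤
      Module.finrank ℂ (qMul n d) + Module.finrank ℂ (harm n d) := by
  rcases lt_or_ge d 2 with hd | hd
  · rw [qMul_eq_bot_of_lt_two hd, harm_eq_homogeneousSubmodule_of_lt_two hd, finrank_bot,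
      zero_add]
  · rw [finrank_qMul_of_two_le hd, add_comm]
    exact finrank_homogeneousSubmodule_le_finrank_harm_add_finrank d

end Laplacian

/-- For `n ≥ 1` and any `d`, the homogeneous polynomials of degree `d`
decompose as the direct sum of `q·ℂ[ℝⁿ]_{d-2}` and the harmonic homogeneous
polynomials of degree `d`; consequently
`dim ℋᵈ = C(n+d-1, d) − C(n+d-3, d-2)` (the second term read as `0` if `d < 2`). -/
theorem homogeneous_decomposition (n d : ℕ) (hn : 1 ≤ n) :
    homogeneousSubmodule (Fin n) ℂ d = qMul n d ⊔ harm n d ∧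
    Disjoint (qMul n d) (harm n d) ∧
    Module.finrank ℂ (harm n d) =
      Module.finrank ℂ (homogeneousSubmodule (Fin n) ℂ d) - Module.finrank ℂ (qMul n d) ∧
    Module.finrank ℂ (harm n d) =
      (n + d - 1).choose d - (if 2 ≤ d then (n + d - 3).choose (d - 2) else 0) := by
  have : NeZero n := ⟨by omega⟩
  have hdisj := disjoint_qMul_harm (n := n) d
  have hsup : Module.finrank ℂ ↥(qMul n d ⊔ harm n d) =
      Module.finrank ℂ (qMul n d) + Module.finrank ℂ (harm n d) := by
    have := Submodule.finrank_sup_add_finrank_inf_eq (qMul n d) (harm n d)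
    rwa [hdisj.eq_bot, finrank_bot, add_zero] at this
  have hdecomp : homogeneousSubmodule (Fin n) ℂ d = qMul n d ⊔ harm n d :=
    (Submodule.eq_of_le_of_finrank_le (sup_le (qMul_le_homogeneousSubmodule d) inf_le_left)
      (hsup ▸ finrank_homogeneousSubmodule_le_finrank_qMul_add_finrank_harm d)).symm
  have hharm : Module.finrank ℂ (harm n d) =
      Module.finrank ℂ (homogeneousSubmodule (Fin n) ℂ d) - Module.finrank ℂ (qMul n d) := by
    rw [hdecomp, hsup, Nat.add_sub_cancel_left]
  refine ⟨hdecomp, hdisj, hharm, ?_⟩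
  rw [hharm, finrank_homogeneousSubmodule, finrank_qMul, Fintype.card_fin]
end

section
/- (Conservation relation for the determinant character) The first occurrence index of the determinant character of O(n) equals n: the one-dimensional representation det of O(n) does not occur in ℂ[ℝ^{n×k}] for k < n, but occurs in ℂ[ℝ^{n×n}]. -/
open MvPolynomial

/-- A nonzero polynomial `f` on `n×k` real matrices transforming by the
determinant character of `O(n)`: `f(gx) = det(g)·f(x)`. -/
def DetOccurs (n k : ℕ) : Prop :=
  ∃ f : MvPolynomial (Fin n × Fin k) ℂ, f ≠ 0 ∧
    ∀ (g : Matrix.orthogonalGroup (Fin n) ℝ) (x : Matrix (Fin n) (Fin k) ℝ),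
      eval (fun p : Fin n × Fin k =>
          ((((g : Matrix (Fin n) (Fin n) ℝ) * x) p.1 p.2 : ℝ) : ℂ)) f =
        ((g : Matrix (Fin n) (Fin n) ℝ).det : ℂ) *
          eval (fun p : Fin n × Fin k => ((x p.1 p.2 : ℝ) : ℂ)) f

/-!
For `k < n` the columns of any `x ∈ ℝ^{n×k}` lie in a hyperplane, and the reflection `g` in that
hyperplane satisfies `g x = x` and `det g = -1`; hence `f(x) = -f(x)` for a `det`-equivariant `f`,
so `f` vanishes on all real points and is therefore zero. For `k = n` the generic determinant
`det (X_{ij})` transforms by `det` because the determinant is multiplicative.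
-/

theorem MvPolynomial.eq_zero_of_eval_ofReal_eq_zero {σ : Type*} {f : MvPolynomial σ ℂ}
    (h : ∀ x : σ → ℝ, eval (fun i => (x i : ℂ)) f = 0) : f = 0 := by
  refine funext_set (fun _ => Set.range ((↑) : ℝ → ℂ))
    (fun _ => Set.infinite_range_of_injective Complex.ofReal_injective) fun z hz => ?_
  choose x hx using fun i => hz i (Set.mem_univ i)
  rw [map_zero, ← h x]
  exact congrArg (eval · f) (_root_.funext hx).symm

namespace Matrix

variable {K m n : Type*} [Field K] [Fintype m]

theorem exists_ne_zero_vecMul_eq_zero_of_card_lt [Fintype n] (X : Matrix m n K)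
    (h : Fintype.card n < Fintype.card m) : ∃ v ≠ 0, v ᵥ* X = 0 := by
  have hker : LinearMap.ker X.vecMulLinear ≠ ⊥ :=
    LinearMap.ker_ne_bot_of_finrank_lt (by simpa using h)
  obtain ⟨v, hv, hv0⟩ := (Submodule.ne_bot_iff _).mp hker
  exact ⟨v, hv0, hv⟩

variable [DecidableEq m]

def householder (v : m → K) : Matrix m m K :=
  1 - (2 / (v ⬝ᵥ v)) • vecMulVec v v

variable {v : m → K}

theorem transpose_householder : (householder v)ᵀ = householder v := by
  simp [householder, transpose_vecMulVec]

theorem householder_mul_self (hv : v ⬝ᵥ v ≠ 0) : householder v * householder v = 1 := by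
  have hsq : vecMulVec v v * vecMulVec v v = (v ⬝ᵥ v) • vecMulVec v v := by
    rw [vecMulVec_mul_vecMulVec, vecMulVec_smul]
  simp only [householder, sub_mul, mul_sub, Matrix.one_mul, Matrix.mul_one, Matrix.smul_mul,
    Matrix.mul_smul, hsq, smul_smul, div_mul_cancel₀ (2 : K) hv]
  module

theorem householder_mem_orthogonalGroup (hv : v ⬝ᵥ v ≠ 0) :
    householder v ∈ orthogonalGroup m K := by
  rw [mem_orthogonalGroup_iff, transpose_householder, householder_mul_self hv]

theorem det_householder (hv : v ⬝ᵥ v ≠ 0) : (householder v).det = -1 := by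
  rw [householder, sub_eq_add_neg, ← neg_smul, vecMulVec_eq Unit, ← Matrix.mul_smul,
    ← replicateRow_smul, det_one_add_replicateCol_mul_replicateRow, neg_smul, neg_dotProduct,
    smul_dotProduct, smul_eq_mul, div_mul_cancel₀ _ hv]
  norm_num

theorem householder_mul_of_vecMul_eq_zero {X : Matrix m n K} (h : v ᵥ* X = 0) :
    householder v * X = X := by
  rw [householder, Matrix.sub_mul, Matrix.one_mul, Matrix.smul_mul, vecMulVec_mul, h]
  ext i j
  simp [vecMulVec_apply]

theorem exists_mem_orthogonalGroup_det_eq_neg_one_mul_eq_self [Fintype n] [LinearOrder K]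
    [IsStrictOrderedRing K] (X : Matrix m n K) (h : Fintype.card n < Fintype.card m) :
    ∃ g ∈ orthogonalGroup m K, g.det = -1 ∧ g * X = X := by
  obtain ⟨v, hv0, hvX⟩ := exists_ne_zero_vecMul_eq_zero_of_card_lt X h
  have hv : v ⬝ᵥ v ≠ 0 := dotProduct_self_eq_zero.not.mpr hv0
  exact ⟨householder v, householder_mem_orthogonalGroup hv, det_householder hv,
    householder_mul_of_vecMul_eq_zero hvX⟩

theorem eval_det_mvPolynomialX_ofReal (y : Matrix m m ℝ) :
    eval (fun p : m × m => (y p.1 p.2 : ℂ)) (mvPolynomialX m m ℂ).det = (y.det : ℂ) := by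
  rw [eval_det_mvPolynomialX, ← Complex.ofRealHom_eq_coe, RingHom.map_det]
  rfl

end Matrix

theorem not_detOccurs_of_lt {n k : ℕ} (hk : k < n) : ¬ DetOccurs n k := by
  rintro ⟨f, hf0, hf⟩
  refine hf0 (eq_zero_of_eval_ofReal_eq_zero fun x => ?_)
  obtain ⟨g, hg, hdet, hgX⟩ := Matrix.exists_mem_orthogonalGroup_det_eq_neg_one_mul_eq_self
    (Matrix.of fun i j => x (i, j)) (by simpa using hk)
  have hneg := hf ⟨g, hg⟩ (Matrix.of fun i j => x (i, j))
  simp only [hgX, hdet, Complex.ofReal_neg, Complex.ofReal_one, neg_one_mul,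
    Matrix.of_apply] at hneg
  exact CharZero.eq_neg_self_iff.mp hneg

theorem detOccurs_self (n : ℕ) : DetOccurs n n := by
  refine ⟨(Matrix.mvPolynomialX (Fin n) (Fin n) ℂ).det, Matrix.det_mvPolynomialX_ne_zero _ _,
    fun g x => ?_⟩
  simp only [Matrix.eval_det_mvPolynomialX_ofReal, Matrix.det_mul, Complex.ofReal_mul]

/-- Conservation relation for the determinant character: `det` does not occur
in `ℂ[ℝ^{n×k}]` for `k < n`, but occurs in `ℂ[ℝ^{n×n}]`; i.e. its first
occurrence index is `n`. -/
theorem det_first_occurrence (n : ℕ) :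
    (∀ k < n, ¬ DetOccurs n k) ∧ DetOccurs n n :=
  ⟨fun _ hk => not_detOccurs_of_lt hk, detOccurs_self n⟩
end
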